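/- Let m be a prime number and let e be an integer with 2 ≤ e ≤ m. Then the set C(m,e) of packed numerical semigroups with multiplicity m and embedding dimension e is finite and has cardinality equal to the binomial coefficient (m−1 choose e−1). -/

import Mathlib

open scoped Pointwise

/-- A numerical semigroup: an additive submonoid of ℕ with finite complement. -/
def IsNumericalSemigroup (S : Set ℕ) : Prop :=
  0 ∈ S ∧ (∀ a ∈ S, ∀ b ∈ S, a + b ∈ S) ∧ Sᶜ.Finite

/-- Multiplicity: the least positive element. -/
noncomputable def mult (S : Set ℕ) : ℕ := sInf (S \ {0})

/-- Minimal system of generators: (S∖{0}) ∖ ((S∖{0})+(S∖{0})). -/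
def msg (S : Set ℕ) : Set ℕ := (S \ {0}) \ ((S \ {0}) + (S \ {0}))

/-- Embedding dimension: cardinality of the minimal system of generators. -/
noncomputable def edim (S : Set ℕ) : ℕ := (msg S).ncard

/-- The submonoid of (ℕ,+) generated by a set, as a set. -/
def genSet (B : Set ℕ) : Set ℕ := (AddSubmonoid.closure B : Set ℕ)

/-- Packed numerical semigroup: msg(S) ⊆ {m(S),…,2m(S)−1}. -/
def IsPacked (S : Set ℕ) : Prop := msg S ⊆ Set.Icc (mult S) (2 * mult S - 1)

/-- L(m,e): numerical semigroups with multiplicity m and embedding dimension e. -/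
def Lset (m e : ℕ) : Set (Set ℕ) :=
  {S | IsNumericalSemigroup S ∧ mult S = m ∧ edim S = e}

/-- C(m,e): packed numerical semigroups in L(m,e). -/
def Cset (m e : ℕ) : Set (Set ℕ) := {S ∈ Lset m e | IsPacked S}

/-- φ(S): the monoid generated by {m + (x mod m) : x ∈ msg(S)}, m = mult S. -/
noncomputable def phi (S : Set ℕ) : Set ℕ :=
  genSet ((fun x => mult S + x % mult S) '' msg S)

/-- The class [S] = {T ∈ L(m,e) : φ(T) = φ(S)}. -/
def classOf (m e : ℕ) (S : Set ℕ) : Set (Set ℕ) := {T ∈ Lset m e | phi T = phi S}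

/-- Frobenius number: the largest element of the complement. -/
noncomputable def Frob (S : Set ℕ) : ℕ := sSup Sᶜ

/-- Genus: the cardinality of the complement. -/
noncomputable def genus (S : Set ℕ) : ℕ := Sᶜ.ncard

/-- The Apéry set of n in S. -/
def Ap (S : Set ℕ) (n : ℕ) : Set ℕ := {s ∈ S | ¬ ∃ t ∈ S, s = t + n}

/-- Minimal elements of a set in a partial order. -/
def minimalsOf {β : Type*} [PartialOrder β] (X : Set β) : Set β :=
  {x ∈ X | ∀ y ∈ X, y ≤ x → y = x}

/-!
A packed numerical semigroup of multiplicity `m` is generated by its minimal generators, which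
lie in `[m, 2m - 1]` and include `m`; conversely every `B ⊆ [m, 2m - 1]` containing `m` is the
minimal system of generators of the monoid it generates, since a sum of two nonzero elements of
that monoid is at least `2m`. For `m` prime, any `B` with a second element besides `m` generates a
cofinite monoid, because that element is coprime to `m`. Hence `S ↦ msg S \ {m}` is a bijection
from `C(m, e)` onto the `(e - 1)`-subsets of `[m + 1, 2m - 1]`.
-/

section genSet

variable {m : ℕ} {B : Set ℕ}

lemma eq_zero_or_le_of_mem_genSet (hB : B ⊆ Set.Ici m) {x : ℕ} (hx : x ∈ genSet B) :
    x = 0 ∨ m ≤ x := by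
  induction hx using AddSubmonoid.closure_induction with
  | mem y hy => exact Or.inr (hB hy)
  | zero => exact Or.inl rfl
  | add y z _ _ ihy ihz => omega

lemma mult_genSet (hm : 0 < m) (hB : B ⊆ Set.Ici m) (hmB : m ∈ B) : mult (genSet B) = m := by
  have hm_mem : m ∈ genSet B \ {0} := ⟨AddSubmonoid.subset_closure hmB, hm.ne'⟩
  have hinf_mem := Nat.sInf_mem ⟨m, hm_mem⟩
  refine le_antisymm (Nat.sInf_le hm_mem) ?_
  exact (eq_zero_or_le_of_mem_genSet hB hinf_mem.1).resolve_left hinf_mem.2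

lemma msg_genSet_subset (B : Set ℕ) : msg (genSet B) ⊆ B := by
  rintro x ⟨⟨hx, hx0⟩, hx_sum⟩
  induction hx using AddSubmonoid.closure_induction with
  | mem y hy => exact hy
  | zero => exact absurd rfl hx0
  | add y z hy hz ihy ihz =>
    by_cases hy0 : y = 0
    · subst hy0
      simp only [zero_add] at hx0 hx_sum ⊢
      exact ihz hx_sum hx0
    by_cases hz0 : z = 0
    · subst hz0
      simp only [add_zero] at hx0 hx_sum ⊢
      exact ihy hx_sum hx0
    have hy' : y ∈ genSet B \ {0} := ⟨hy, hy0⟩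
    have hz' : z ∈ genSet B \ {0} := ⟨hz, hz0⟩
    exact absurd (Set.add_mem_add hy' hz') hx_sum

lemma subset_msg_genSet (hm : 0 < m) (hB : B ⊆ Set.Icc m (2 * m - 1)) : B ⊆ msg (genSet B) := by
  intro x hx
  have hx_le : m ≤ x ∧ x ≤ 2 * m - 1 := hB hx
  refine ⟨⟨AddSubmonoid.subset_closure hx, by simp only [Set.mem_singleton_iff]; omega⟩, ?_⟩
  intro hx_sum
  obtain ⟨y, ⟨hy, hy0⟩, z, ⟨hz, hz0⟩, hyz⟩ := Set.mem_add.mp hx_sum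
  have hBm : B ⊆ Set.Ici m := fun b hb => (hB hb).1
  have := (eq_zero_or_le_of_mem_genSet hBm hy).resolve_left hy0
  have := (eq_zero_or_le_of_mem_genSet hBm hz).resolve_left hz0
  omega

lemma msg_genSet (hm : 0 < m) (hB : B ⊆ Set.Icc m (2 * m - 1)) : msg (genSet B) = B :=
  (msg_genSet_subset B).antisymm (subset_msg_genSet hm hB)

lemma genSet_compl_finite (hgcd : Nat.setGcd B = 1) : (genSet B)ᶜ.Finite := by
  obtain ⟨n, hn⟩ := Nat.exists_mem_closure_of_ge B
  exact (Set.finite_Iio n).subset fun k hk =>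
    lt_of_not_ge fun hnk => hk (hn k hnk (hgcd ▸ one_dvd k))

lemma isNumericalSemigroup_genSet (hgcd : Nat.setGcd B = 1) : IsNumericalSemigroup (genSet B) :=
  ⟨zero_mem _, fun _ ha _ hb => add_mem ha hb, genSet_compl_finite hgcd⟩

end genSet

lemma genSet_msg {S : Set ℕ} (h0 : 0 ∈ S) (hadd : ∀ a ∈ S, ∀ b ∈ S, a + b ∈ S) :
    genSet (msg S) = S := by
  refine subset_antisymm ?_ fun x hx => ?_
  · let T : AddSubmonoid ℕ := ⟨⟨S, fun ha hb => hadd _ ha _ hb⟩, h0⟩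
    exact AddSubmonoid.closure_le (S := T).mpr fun x hx => hx.1.1
  induction x using Nat.strong_induction_on with
  | _ x ih =>
    by_cases hx0 : x = 0
    · exact hx0 ▸ zero_mem _
    by_cases hx_msg : x ∈ msg S
    · exact AddSubmonoid.subset_closure hx_msg
    have hx_sum : x ∈ (S \ {0}) + (S \ {0}) := by
      by_contra h
      exact hx_msg ⟨⟨hx, hx0⟩, h⟩
    obtain ⟨y, ⟨hy, hy0⟩, z, ⟨hz, hz0⟩, rfl⟩ := Set.mem_add.mp hx_sum
    have : y ≠ 0 := hy0
    have : z ≠ 0 := hz0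
    exact add_mem (ih y (by omega) hy) (ih z (by omega) hz)

lemma mult_mem_msg {S : Set ℕ} (hS : IsNumericalSemigroup S) : mult S ∈ msg S := by
  have hS_ne : (S \ {0}).Nonempty :=
    ((hS.2.2.infinite_compl.mono (compl_compl S).le).sdiff (Set.finite_singleton 0)).nonempty
  refine ⟨Nat.sInf_mem hS_ne, ?_⟩
  intro h_sum
  obtain ⟨y, hy, z, hz, hyz⟩ := Set.mem_add.mp h_sum
  have := Nat.sInf_le hy
  have := Nat.sInf_le hz
  have : y ≠ 0 := hy.2
  have : z ≠ 0 := hz.2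
  unfold mult at hyz
  omega

lemma setGcd_eq_one_of_coprime {B : Set ℕ} {a b : ℕ} (ha : a ∈ B) (hb : b ∈ B)
    (hab : a.Coprime b) : Nat.setGcd B = 1 :=
  Nat.dvd_one.mp <| hab.gcd_eq_one ▸
    Nat.dvd_gcd (Nat.setGcd_dvd_of_mem ha) (Nat.setGcd_dvd_of_mem hb)

section Cset

variable {m : ℕ} {A : Finset ℕ}

lemma insert_subset_Icc (hA : A ⊆ Finset.Icc (m + 1) (2 * m - 1)) :
    insert m (A : Set ℕ) ⊆ Set.Icc m (2 * m - 1) := by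
  rintro x (rfl | hx)
  · exact ⟨le_rfl, by omega⟩
  · have := Finset.mem_Icc.mp (hA hx)
    exact ⟨by omega, by omega⟩

lemma notMem_of_subset_Icc (hA : A ⊆ Finset.Icc (m + 1) (2 * m - 1)) : m ∉ A := fun h => by
  have := Finset.mem_Icc.mp (hA h)
  omega

lemma genSet_insert_mem_Cset (hm : m.Prime) (hA : A ⊆ Finset.Icc (m + 1) (2 * m - 1))
    (hA_ne : A.Nonempty) : genSet (insert m (A : Set ℕ)) ∈ Cset m (A.card + 1) := by
  have hm0 := hm.pos
  have hB := insert_subset_Icc hA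
  have hmult : mult (genSet (insert m (A : Set ℕ))) = m :=
    mult_genSet hm0 (fun x hx => (hB hx).1) (Set.mem_insert _ _)
  obtain ⟨a, haA⟩ := hA_ne
  have ha := Finset.mem_Icc.mp (hA haA)
  have hcop : m.Coprime a := hm.coprime_iff_not_dvd.mpr <|
    Nat.not_dvd_of_lt_of_lt_mul_succ (k := 1) (by omega) (by omega)
  have hgcd : Nat.setGcd (insert m (A : Set ℕ)) = 1 :=
    setGcd_eq_one_of_coprime (Set.mem_insert _ _) (Set.mem_insert_of_mem _ haA) hcop
  refine ⟨⟨isNumericalSemigroup_genSet hgcd, hmult, ?_⟩, ?_⟩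
  · rw [edim, msg_genSet hm0 hB, ← Finset.coe_insert, Set.ncard_coe_finset,
      Finset.card_insert_of_notMem (notMem_of_subset_Icc hA)]
  · rw [IsPacked, msg_genSet hm0 hB, hmult]
    exact hB

lemma exists_finset_genSet_insert_eq {S : Set ℕ} {e : ℕ} (hS : S ∈ Cset m e) :
    ∃ A ∈ (Finset.Icc (m + 1) (2 * m - 1)).powersetCard (e - 1),
      genSet (insert m (A : Set ℕ)) = S := by
  obtain ⟨⟨hNS, rfl, rfl⟩, hpacked⟩ := hS
  have hfin : (msg S).Finite := (Set.finite_Icc _ _).subset hpacked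
  have hm_msg := mult_mem_msg hNS
  refine ⟨hfin.toFinset.erase (mult S), Finset.mem_powersetCard.mpr ⟨?_, ?_⟩, ?_⟩
  · intro x hx
    rw [Finset.mem_erase, Set.Finite.mem_toFinset] at hx
    have : mult S ≤ x ∧ x ≤ 2 * mult S - 1 := hpacked hx.2
    rw [Finset.mem_Icc]
    omega
  · rw [Finset.card_erase_of_mem (hfin.mem_toFinset.mpr hm_msg), edim,
      Set.ncard_eq_toFinset_card _ hfin]
  · rw [Finset.coe_erase, hfin.coe_toFinset, Set.insert_sdiff_singleton,
      Set.insert_eq_of_mem hm_msg]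
    exact genSet_msg hNS.1 hNS.2.1

lemma injOn_genSet_insert (hm : 0 < m) :
    Set.InjOn (fun A : Finset ℕ => genSet (insert m (A : Set ℕ)))
      {A | A ⊆ Finset.Icc (m + 1) (2 * m - 1)} := by
  have hmsg : ∀ A : Finset ℕ, A ⊆ Finset.Icc (m + 1) (2 * m - 1) →
      msg (genSet (insert m (A : Set ℕ))) \ {m} = A := fun A hA => by
    rw [msg_genSet hm (insert_subset_Icc hA),
      Set.insert_sdiff_self_of_notMem (Finset.mem_coe.not.mpr (notMem_of_subset_Icc hA))]
  intro A hA A' hA' h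
  rw [← Finset.coe_inj, ← hmsg A hA, ← hmsg A' hA']
  exact congrArg (msg · \ {m}) h

end Cset

theorem stmt5_general (m e : ℕ) (hm : m.Prime) (h2 : 2 ≤ e) :
    (Cset m e).Finite ∧ (Cset m e).ncard = (m - 1).choose (e - 1) := by
  have hC : Cset m e = (fun A : Finset ℕ => genSet (insert m (A : Set ℕ))) ''
      ((Finset.Icc (m + 1) (2 * m - 1)).powersetCard (e - 1) : Set (Finset ℕ)) := by
    ext S
    refine ⟨exists_finset_genSet_insert_eq, ?_⟩
    rintro ⟨A, hA, rfl⟩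
    obtain ⟨hA_sub, hA_card⟩ := Finset.mem_powersetCard.mp hA
    have hA_ne : A.Nonempty := Finset.card_pos.mp (by omega)
    simpa only [hA_card, Nat.sub_add_cancel (by omega : 1 ≤ e)] using
      genSet_insert_mem_Cset hm hA_sub hA_ne
  rw [hC]
  refine ⟨(Finset.finite_toSet _).image _, ?_⟩
  rw [Set.InjOn.ncard_image, Set.ncard_coe_finset, Finset.card_powersetCard, Nat.card_Icc]
  · congr 1
    omega
  · exact (injOn_genSet_insert hm.pos).mono fun A hA => (Finset.mem_powersetCard.mp hA).1

/-- if m is prime and 2 ≤ e ≤ m, then C(m,e) is finite with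
cardinality (m−1 choose e−1). -/
theorem stmt5 (m e : ℕ) (hm : m.Prime) (h2 : 2 ≤ e) (hem : e ≤ m) :
    (Cset m e).Finite ∧ (Cset m e).ncard = (m - 1).choose (e - 1) :=
  stmt5_general m e hm h2
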